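/- arXiv:1701.02341 — 3 statements merged into one kernel-verified Lean document; each statement's English description precedes it below -/
import Mathlib

section
/- Let G be a finite abelian group of odd order. Then G is isomorphic to the group of units of some commutative ring if and only if G is isomorphic to the group of units of a finite direct product of finite fields of characteristic 2. -/
/-!
If `Rˣ` has odd order then `-1 = 1` in `R`, so `2 = 0`; then `(1 + x) ^ 2 ^ m = 1 + x ^ 2 ^ m`,
so for nilpotent `x` the unit `1 + x` has `2`-power order and must be `1`: `R` is reduced.
The units of `R` are roots of unity, hence integral over `ℤ`, so the subring they generate is
finite (it is killed by `2`) and has the same units. A finite reduced ring is the product of its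
residue fields, and each of these is a Galois field of characteristic `2`.
-/

theorem eq_one_of_pow_two_pow_eq_one {G : Type*} [Group G] (hodd : Odd (Nat.card G)) {g : G}
    {k : ℕ} (h : g ^ 2 ^ k = 1) : g = 1 :=
  (Nat.Coprime.pow_left_bijective ((Nat.coprime_two_right.2 hodd).pow_right k)).injective
    (h.trans (one_pow _).symm)

theorem two_eq_zero_of_odd_card_units {R : Type*} [Ring R] (hodd : Odd (Nat.card Rˣ)) :
    (2 : R) = 0 := by
  have h : ((-1 : Rˣ) : R) = 1 := by
    rw [eq_one_of_pow_two_pow_eq_one hodd (g := -1) (k := 1) (by simp), Units.val_one]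
  rw [Units.val_neg, Units.val_one] at h
  rw [← one_add_one_eq_two]
  nth_rewrite 1 [← h]
  exact neg_add_cancel 1

theorem isReduced_of_odd_card_units {R : Type*} [CommRing R] (hodd : Odd (Nat.card Rˣ)) :
    IsReduced R := by
  nontriviality R
  have : CharP R 2 :=
    CharTwo.of_one_ne_zero_of_two_eq_zero one_ne_zero (two_eq_zero_of_odd_card_units hodd)
  refine ⟨fun x ⟨m, hm⟩ => ?_⟩
  obtain ⟨u, hu⟩ := IsNilpotent.isUnit_one_add ⟨m, hm⟩
  have hu2 : u ^ 2 ^ m = 1 := by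
    ext
    rw [Units.val_pow_eq_pow_val, hu, add_pow_char_pow, one_pow,
      pow_eq_zero_of_le Nat.lt_two_pow_self.le hm, add_zero, Units.val_one]
  have h := congrArg Units.val (eq_one_of_pow_two_pow_eq_one hodd hu2)
  rwa [hu, Units.val_one, add_eq_left] at h

theorem exists_ringEquiv_galoisField (p : ℕ) [Fact p.Prime] (K : Type*) [Field K] [Finite K]
    [CharP K p] : ∃ n, 0 < n ∧ Nonempty (K ≃+* GaloisField p n) := by
  have : Fintype K := Fintype.ofFinite K
  obtain ⟨n, -, hn⟩ := FiniteField.card K p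
  let := ZMod.algebra K p
  exact ⟨n, n.pos,
    ⟨(GaloisField.algEquivGaloisField p n (Nat.card_eq_fintype_card.trans hn)).toRingEquiv⟩⟩

theorem exists_ringEquiv_pi_galoisField (p : ℕ) [Fact p.Prime] (R : Type*) [CommRing R]
    [Finite R] [IsReduced R] (hp : (p : R) = 0) :
    ∃ (t : ℕ) (n : Fin t → ℕ), (∀ i, 0 < n i) ∧
      Nonempty (R ≃+* ∀ i, GaloisField p (n i)) := by
  have (I : MaximalSpectrum R) :
      ∃ n, 0 < n ∧ Nonempty ((R ⧸ I.asIdeal) ≃+* GaloisField p n) := by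
    let := Ideal.Quotient.field I.asIdeal
    have : Finite (R ⧸ I.asIdeal) := Finite.of_surjective _ Ideal.Quotient.mk_surjective
    have : CharP (R ⧸ I.asIdeal) p := (CharP.charP_iff_prime_eq_zero Fact.out).2 <| by
      simpa using congrArg (Ideal.Quotient.mk I.asIdeal) hp
    exact exists_ringEquiv_galoisField p (R ⧸ I.asIdeal)
  choose n hn e using this
  let σ := Finite.equivFin (MaximalSpectrum R)
  refine ⟨_, n ∘ σ.symm, fun i => hn _, ⟨?_⟩⟩
  exact (IsArtinianRing.equivPi R).toRingEquiv.trans <|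
    (RingEquiv.piCongrRight fun I => (e I).some).trans (RingEquiv.piCongrLeft' _ σ)

theorem finite_adjoin_int_range_units {R : Type*} [CommRing R] [Finite Rˣ] {n : ℕ}
    (hn : n ≠ 0) (hR : (n : R) = 0) :
    Finite (Algebra.adjoin ℤ (Set.range ((↑) : Rˣ → R))) := by
  have : Module.Finite ℤ (Algebra.adjoin ℤ (Set.range ((↑) : Rˣ → R))) := by
    refine Algebra.finite_adjoin_of_finite_of_isIntegral (Set.finite_range _) ?_
    rintro _ ⟨u, rfl⟩
    refine IsIntegral.of_pow (Nat.card_pos (α := Rˣ)) ?_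
    rw [← Units.val_pow_eq_pow_val, pow_card_eq_one', Units.val_one]
    exact isIntegral_one
  exact Module.finite_of_fg_torsion _ fun x =>
    ⟨⟨n, mem_nonZeroDivisors_of_ne_zero (Int.natCast_ne_zero.2 hn)⟩,
      Subtype.ext (by simp [hR])⟩

def Submonoid.unitsEquivOfUnitsEqTop {M : Type*} [Monoid M] (S : Submonoid M)
    (h : S.units = ⊤) : Mˣ ≃* Sˣ :=
  (Subgroup.topEquiv.symm.trans (MulEquiv.subgroupCongr h.symm)).trans S.unitsEquivUnitsType

theorem adjoin_range_units_toSubmonoid_units_eq_top (A R : Type*) [CommSemiring A] [Semiring R]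
    [Algebra A R] :
    (Algebra.adjoin A (Set.range ((↑) : Rˣ → R))).toSubmonoid.units = ⊤ :=
  eq_top_iff.2 fun u _ =>
    ⟨Algebra.subset_adjoin ⟨u, rfl⟩, Algebra.subset_adjoin ⟨u⁻¹, rfl⟩⟩

/-- A finite abelian group `G` of odd order is isomorphic to the group of units
of some commutative ring if and only if it is isomorphic to the group of units
of a finite direct product of finite fields of characteristic 2 (every finite
field of characteristic 2 being isomorphic to some `GaloisField 2 n` with
`n ≥ 1`). -/
theorem odd_order_group_is_unit_group_iff
    (G : Type*) [CommGroup G] [Finite G] (hodd : Odd (Nat.card G)) :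
    (∃ (R : Type) (_ : CommRing R), Nonempty (G ≃* Rˣ)) ↔
      (∃ (t : ℕ) (n : Fin t → ℕ), (∀ i, 0 < n i) ∧
        Nonempty (G ≃* (∀ i, GaloisField 2 (n i))ˣ)) := by
  constructor
  · rintro ⟨R, _, ⟨e⟩⟩
    have : Finite Rˣ := .of_equiv G e.toEquiv
    have hoddR : Odd (Nat.card Rˣ) := Nat.card_congr e.toEquiv ▸ hodd
    let S := Algebra.adjoin ℤ (Set.range ((↑) : Rˣ → R))
    have : Finite S :=
      finite_adjoin_int_range_units two_ne_zero (two_eq_zero_of_odd_card_units hoddR)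
    let f : Rˣ ≃* Sˣ :=
      S.toSubmonoid.unitsEquivOfUnitsEqTop (adjoin_range_units_toSubmonoid_units_eq_top ℤ R)
    have hoddS : Odd (Nat.card Sˣ) := Nat.card_congr f.toEquiv ▸ hoddR
    have := isReduced_of_odd_card_units hoddS
    obtain ⟨t, n, hn, ⟨g⟩⟩ :=
      exists_ringEquiv_pi_galoisField 2 S (two_eq_zero_of_odd_card_units hoddS)
    exact ⟨t, n, hn, ⟨(e.trans f).trans (Units.mapEquiv g.toMulEquiv)⟩⟩
  · rintro ⟨t, n, -, ⟨e⟩⟩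
    exact ⟨_, inferInstance, ⟨e⟩⟩
end

section
/- For every positive integer m, the group of units of the commutative ring R = Z[x]/(x², mx) has exactly 2m elements; in fact R^× is isomorphic to C₂ × C_m. Consequently, every even positive integer is the cardinality of the group of units of some commutative ring. -/
open Polynomial TrivSqZeroExt


instance (m : ℕ) : Module ℤᵐᵒᵖ (ZMod m) :=
  Module.compHom (ZMod m) ((RingEquiv.toOpposite ℤ).symm : ℤᵐᵒᵖ →+* ℤ)
instance (m : ℕ) : IsCentralScalar ℤ (ZMod m) := ⟨fun _ _ => rfl⟩

noncomputable def evalEps (m : ℕ) : Polynomial ℤ →+* TrivSqZeroExt ℤ (ZMod m) :=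
  (aeval (inr 1 : TrivSqZeroExt ℤ (ZMod m))).toRingHom

lemma evalEps_apply (m : ℕ) (p : Polynomial ℤ) :
    evalEps m p = inl (p.coeff 0) + inr ((p.coeff 1 : ZMod m)) := by
  conv_lhs => rw [← p.divX_mul_X_add, ← p.divX.divX_mul_X_add]
  simp only [evalEps, AlgHom.toRingHom_eq_coe, RingHom.coe_coe, map_add, map_mul, aeval_X,
    aeval_C, algebraMap_int_eq, eq_intCast, coeff_divX, zero_add]
  rw [add_mul, mul_assoc, inr_mul_inr, mul_zero, zero_add]
  ext <;> simp [zsmul_eq_mul]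

lemma evalEps_surjective (m : ℕ) : Function.Surjective (evalEps m) := by
  intro x
  refine ⟨C x.fst + C (x.snd.cast : ℤ) * X, ?_⟩
  rw [evalEps_apply]
  have c0 : (C x.fst + C (x.snd.cast : ℤ) * X).coeff 0 = x.fst := by simp
  have c1 : (C x.fst + C (x.snd.cast : ℤ) * X).coeff 1 = (x.snd.cast : ℤ) := by
    rw [coeff_add, coeff_C_mul, coeff_X_one, coeff_C]; simp
  rw [c0, c1]
  ext <;> simp [ZMod.intCast_zmod_cast]

lemma evalEps_ker (m : ℕ) :
    RingHom.ker (evalEps m) =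
      Ideal.span {(X : Polynomial ℤ) ^ 2, (m : Polynomial ℤ) * X} := by
  ext p
  rw [RingHom.mem_ker, evalEps_apply]
  constructor
  · intro h
    have h1 : p.coeff 0 = 0 := by
      have := congrArg TrivSqZeroExt.fst h; simpa using this
    have h2 : ((p.coeff 1 : ℤ) : ZMod m) = 0 := by
      have := congrArg TrivSqZeroExt.snd h; simpa using this
    obtain ⟨k, hk⟩ := (ZMod.intCast_zmod_eq_zero_iff_dvd _ m).mp h2
    rw [Ideal.mem_span_pair]
    refine ⟨p.divX.divX, C k, ?_⟩
    conv_rhs => rw [← p.divX_mul_X_add, ← p.divX.divX_mul_X_add]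
    simp only [coeff_divX, zero_add, h1, hk, map_zero, add_zero, map_mul]
    push_cast
    ring_nf
    norm_cast
  · intro hp
    rw [Ideal.mem_span_pair] at hp
    obtain ⟨a, b, rfl⟩ := hp
    rw [← evalEps_apply, map_add, map_mul, map_mul]
    have hX2 : evalEps m (X ^ 2) = 0 := by
      rw [evalEps_apply]; ext <;> simp
    have hmX : evalEps m ((m : Polynomial ℤ) * X) = 0 := by
      rw [evalEps_apply]
      ext <;> simp [coeff_natCast_ite]
    rw [hX2, hmX, mul_zero, mul_zero, add_zero]

noncomputable def ringEquivT (m : ℕ) :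
    (Polynomial ℤ ⧸ Ideal.span {(X : Polynomial ℤ) ^ 2, (m : Polynomial ℤ) * X}) ≃+*
      TrivSqZeroExt ℤ (ZMod m) :=
  (Ideal.quotEquivOfEq (evalEps_ker m).symm).trans
    (RingHom.quotientKerEquivOfSurjective (evalEps_surjective m))

lemma mul_repr (m : ℕ) (a c : ℤ) (b d : ZMod m) :
    ((inl a + inr b) * (inl c + inr d) : TrivSqZeroExt ℤ (ZMod m)) =
      inl (a * c) + inr (a • d + c • b) := by
  ext <;> simp [op_smul_eq_smul]

def psi (m : ℕ) : ℤˣ × Multiplicative (ZMod m) →* (TrivSqZeroExt ℤ (ZMod m))ˣ where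
  toFun p :=
    { val := inl ((p.1 : ℤ)) + inr ((p.1 : ℤ) • p.2.toAdd)
      inv := inl (((p.1⁻¹ : ℤˣ) : ℤ)) + inr (-(((p.1⁻¹ : ℤˣ) : ℤ) • p.2.toAdd))
      val_inv := by
        rw [mul_repr, Units.mul_inv]
        have : ((p.1 : ℤ)) • -(((p.1⁻¹ : ℤˣ) : ℤ) • p.2.toAdd)
            + ((p.1⁻¹ : ℤˣ) : ℤ) • ((p.1 : ℤ) • p.2.toAdd) = 0 := by
          rw [smul_neg, smul_smul, smul_smul, Units.mul_inv, Units.inv_mul, neg_add_cancel]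
        rw [this, inr_zero, add_zero, inl_one]
      inv_val := by
        rw [mul_repr, Units.inv_mul]
        have : (((p.1⁻¹ : ℤˣ) : ℤ)) • ((p.1 : ℤ) • p.2.toAdd)
            + ((p.1 : ℤ)) • -(((p.1⁻¹ : ℤˣ) : ℤ) • p.2.toAdd) = 0 := by
          rw [smul_neg, smul_smul, smul_smul, Units.mul_inv, Units.inv_mul, add_neg_cancel]
        rw [this, inr_zero, add_zero, inl_one]
      }
  map_one' := by
    refine Units.ext ?_
    show inl ((1 : ℤˣ) : ℤ) + inr (((1:ℤˣ) : ℤ) • (1 : Multiplicative (ZMod m)).toAdd) = 1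
    simp
  map_mul' p q := by
    refine Units.ext ?_
    show inl (((p.1 * q.1 : ℤˣ)) : ℤ) + inr ((((p.1 * q.1 : ℤˣ)) : ℤ) • (p.2 * q.2).toAdd)
      = (inl ((p.1 : ℤ)) + inr ((p.1 : ℤ) • p.2.toAdd)) *
        (inl ((q.1 : ℤ)) + inr ((q.1 : ℤ) • q.2.toAdd))
    rw [mul_repr]
    ext
    · simp
    · simp only [snd_add, snd_inl, snd_inr, zero_add, toAdd_mul, Units.val_mul, zsmul_eq_mul]
      push_cast
      ring

lemma psi_injective (m : ℕ) : Function.Injective (psi m) := by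
  rw [injective_iff_map_eq_one]
  rintro ⟨a, b⟩ h
  have hval := congrArg Units.val h
  have hfst := congrArg TrivSqZeroExt.fst hval
  simp only [psi] at hfst
  simp at hfst
  subst hfst
  have hsnd := congrArg TrivSqZeroExt.snd hval
  simp only [psi] at hsnd
  simp at hsnd
  simp [Prod.ext_iff, hsnd]

lemma psi_surjective (m : ℕ) : Function.Surjective (psi m) := by
  intro u
  have hu : IsUnit u.val.fst := isUnit_iff_isUnit_fst.mp u.isUnit
  refine ⟨(hu.unit, Multiplicative.ofAdd (((hu.unit⁻¹ : ℤˣ) : ℤ) • u.val.snd)), ?_⟩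
  refine Units.ext ?_
  show inl ((hu.unit : ℤ)) + inr ((hu.unit : ℤ) • (((hu.unit⁻¹ : ℤˣ) : ℤ) • u.val.snd)) = u.val
  rw [smul_smul, Units.mul_inv, one_smul, IsUnit.unit_spec, inl_fst_add_inr_snd_eq]

noncomputable def unitsEquivT (m : ℕ) :
    (TrivSqZeroExt ℤ (ZMod m))ˣ ≃* ℤˣ × Multiplicative (ZMod m) :=
  (MulEquiv.ofBijective (psi m) ⟨psi_injective m, psi_surjective m⟩).symm

def intUnitsEquiv : ℤˣ ≃* Multiplicative (ZMod 2) where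
  toFun u := Multiplicative.ofAdd (if u = 1 then 0 else 1)
  invFun b := if b.toAdd = 0 then 1 else -1
  left_inv u := by rcases Int.units_eq_one_or u with rfl | rfl <;> decide
  right_inv b := by revert b; decide
  map_mul' u v := by
    rcases Int.units_eq_one_or u with rfl | rfl <;>
      rcases Int.units_eq_one_or v with rfl | rfl <;> decide

lemma main_iso (m : ℕ) :
    Nonempty ((Polynomial ℤ ⧸ Ideal.span
        {(X : Polynomial ℤ) ^ 2, (m : Polynomial ℤ) * X})ˣ ≃*
      Multiplicative (ZMod 2) × Multiplicative (ZMod m)) :=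
  ⟨((Units.mapEquiv (ringEquivT m).toMulEquiv).trans (unitsEquivT m)).trans
    (MulEquiv.prodCongr intUnitsEquiv (MulEquiv.refl _))⟩

lemma main_card (m : ℕ) :
    Nat.card (Polynomial ℤ ⧸ Ideal.span
        {(X : Polynomial ℤ) ^ 2, (m : Polynomial ℤ) * X})ˣ = 2 * m := by
  obtain ⟨e⟩ := main_iso m
  rw [Nat.card_congr e.toEquiv, Nat.card_prod,
    Nat.card_congr (Multiplicative.toAdd (α := ZMod 2)),
    Nat.card_congr (Multiplicative.toAdd (α := ZMod m)),
    Nat.card_zmod, Nat.card_zmod]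

/-- For every positive integer `m`, the ring `R = ℤ[x]/(x², mx)` has exactly
`2m` units, and in fact `Rˣ ≅ C₂ × C_m`. Consequently, every even positive
integer is the number of units of some commutative ring. -/
theorem card_units_zx_quotient_and_even_realizable
    (m : ℕ) (hm : 0 < m) :
    (Nat.card (Polynomial ℤ ⧸ Ideal.span
        {(X : Polynomial ℤ) ^ 2, (m : Polynomial ℤ) * X})ˣ = 2 * m ∧
      Nonempty ((Polynomial ℤ ⧸ Ideal.span
          {(X : Polynomial ℤ) ^ 2, (m : Polynomial ℤ) * X})ˣ ≃*
        Multiplicative (ZMod 2) × Multiplicative (ZMod m))) ∧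
    ∀ k : ℕ, 0 < k → Even k →
      ∃ (R : Type) (_ : CommRing R), Nat.card Rˣ = k := by
  refine ⟨⟨main_card m, main_iso m⟩, ?_⟩
  intro k hk hke
  obtain ⟨t, rfl⟩ := hke
  refine ⟨Polynomial ℤ ⧸ Ideal.span {(X : Polynomial ℤ) ^ 2, (t : Polynomial ℤ) * X},
    inferInstance, ?_⟩
  rw [main_card t]
  omega
end

section
/- Let λ be a cardinal number. There exists a commutative ring R with |R^×| = λ if and only if λ is (1) an odd positive integer of the form ∏_{i=1}^t (2^{n_i} − 1) for some positive integers n₁, …, n_t, or (2) an even positive integer, or (3) an infinite cardinal. -/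
/-!
If `Rˣ` is finite of odd order then `-1 = 1`, so `R` has characteristic 2, and for nilpotent `x`
the unit `1 + x` has order dividing both `|Rˣ|` and a power of 2, so `R` is reduced. The units span
a finite `𝔽₂`-subalgebra with the same units; being finite and reduced it is a product of finite
fields `𝔽_{2^{nᵢ}}`, whose unit groups have orders `2^{nᵢ} - 1`.
Conversely, products of fields `𝔽_{2^n}` realise the odd values, `ℤ ⋉ ℤ/m` (a trivial square-zero
extension) has `2m` units, and an infinite field of cardinality `λ` has `λ` units.
-/

open Module

namespace TrivSqZeroExt

variable {R M : Type*} [Semiring R] [AddCommGroup M] [Module R M] [Module Rᵐᵒᵖ M]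
  [SMulCommClass R Rᵐᵒᵖ M]

noncomputable def unitsEquivProd : (TrivSqZeroExt R M)ˣ ≃ Rˣ × M where
  toFun x := ((isUnit_iff_isUnit_fst.mp x.isUnit).unit, x.val.snd)
  invFun p := (isUnit_iff_isUnit_fst.mpr (by simp) :
    IsUnit (inl (p.1 : R) + inr p.2 : TrivSqZeroExt R M)).unit
  left_inv x := Units.ext (by simp [inl_fst_add_inr_snd_eq])
  right_inv p := Prod.ext (Units.ext (by simp)) (by simp)

end TrivSqZeroExt

lemma SubmonoidClass.natCard_units_eq_of_forall_units_mem {M S : Type*} [Monoid M] [SetLike S M]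
    [SubmonoidClass S M] (s : S) (h : ∀ u : Mˣ, (u : M) ∈ s) :
    Nat.card sˣ = Nat.card Mˣ := by
  refine Nat.card_eq_of_bijective (Units.map (SubmonoidClass.subtype s))
    ⟨Units.map_injective Subtype.val_injective, fun u => ?_⟩
  exact ⟨⟨⟨u, h u⟩, ⟨↑u⁻¹, h u⁻¹⟩, Subtype.ext u.mul_inv, Subtype.ext u.inv_mul⟩, Units.ext rfl⟩

lemma mk_units_eq_mk_of_infinite (G : Type*) [GroupWithZero G] [Infinite G] :
    Cardinal.mk Gˣ = Cardinal.mk G := by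
  rw [Cardinal.mk_congr unitsEquivNeZero]
  exact Cardinal.mk_compl_of_infinite {0}
    (by simpa using Cardinal.one_lt_aleph0.trans_le (Cardinal.infinite_iff.mp ‹_›))

lemma exists_commRing_mk_units_eq_of_natCard_units {R : Type} [CommRing R] {k : ℕ} (hk : k ≠ 0)
    (h : Nat.card Rˣ = k) : ∃ (S : Type u) (_ : CommRing S), Cardinal.mk Sˣ = k := by
  refine ⟨ULift R, inferInstance, (Cardinal.toNat_eq_iff hk).mp ?_⟩
  rw [← Nat.card, ← h]
  exact Nat.card_congr (Units.mapEquiv MulEquiv.ulift).toEquiv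

lemma natCard_units_pi_galoisField (p : ℕ) [Fact p.Prime] {ι : Type*} [Fintype ι] (n : ι → ℕ)
    (hn : ∀ i, n i ≠ 0) : Nat.card (∀ i, GaloisField p (n i))ˣ = ∏ i, (p ^ n i - 1) := by
  rw [Nat.card_congr MulEquiv.piUnits.toEquiv, Nat.card_pi]
  exact Finset.prod_congr rfl fun i _ => by rw [Nat.card_units, GaloisField.card p (n i) (hn i)]

lemma exists_commRing_natCard_units_eq_two_mul (m : ℕ) [NeZero m] :
    ∃ (R : Type) (_ : CommRing R), Nat.card Rˣ = 2 * m := by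
  -- `TrivSqZeroExt` also asks for a right action of `ℤ`; take the left one.
  let : Module ℤᵐᵒᵖ (ZMod m) := Module.compHom _ (RingEquiv.toOpposite ℤ).symm.toRingHom
  have : IsCentralScalar ℤ (ZMod m) := ⟨fun _ _ => rfl⟩
  refine ⟨TrivSqZeroExt ℤ (ZMod m), inferInstance, ?_⟩
  rw [Nat.card_congr TrivSqZeroExt.unitsEquivProd, Nat.card_prod, Nat.card_zmod,
    Nat.card_eq_fintype_card, Fintype.card_units_int]

lemma charP_two_of_odd_natCard_units (R : Type*) [CommRing R] [Nontrivial R]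
    (h : Odd (Nat.card Rˣ)) : CharP R 2 := by
  have hneg : (-1 : Rˣ) = 1 := by
    simpa [h.neg_one_pow] using pow_card_eq_one' (x := (-1 : Rˣ))
  refine CharTwo.of_one_ne_zero_of_two_eq_zero one_ne_zero ?_
  have := congrArg Units.val hneg
  push_cast at this
  linear_combination -this

lemma isReduced_of_coprime_natCard_units (R : Type*) [CommRing R] (p : ℕ) [Fact p.Prime]
    [CharP R p] (h : (Nat.card Rˣ).Coprime p) : IsReduced R := by
  refine ⟨fun x ⟨N, hN⟩ => ?_⟩
  have hpow : (1 + x) ^ p ^ N = 1 := by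
    rw [add_pow_char_pow, one_pow,
      pow_eq_zero_of_le (Nat.lt_pow_self (Fact.out : p.Prime).one_lt).le hN, add_zero]
  have hcard : (1 + x) ^ Nat.card Rˣ = 1 := by
    have hu := IsNilpotent.isUnit_one_add ⟨N, hN⟩
    rw [← hu.unit_spec, ← Units.val_pow_eq_pow_val, pow_card_eq_one', Units.val_one]
  simpa [Nat.Coprime.pow_right N h] using pow_gcd_eq_one.mpr ⟨hcard, hpow⟩

lemma Algebra.finite_adjoin_submonoid {K R : Type*} [CommSemiring K] [Finite K] [Semiring R]
    [Algebra K R] (S : Submonoid R) [Finite S] : Finite (Algebra.adjoin K (S : Set R)) := by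
  have : Module.Finite K (Subalgebra.toSubmodule (Algebra.adjoin K (S : Set R))) := by
    rw [Algebra.adjoin_eq_span, Submonoid.closure_eq]
    exact Module.Finite.span_of_finite _ (Set.toFinite _)
  exact Module.finite_of_finite K (M := Subalgebra.toSubmodule (Algebra.adjoin K (S : Set R)))

lemma natCard_units_eq_pow_finrank_sub_one (p : ℕ) [Fact p.Prime] (D : Type*) [DivisionRing D]
    [Finite D] [Module (ZMod p) D] : Nat.card Dˣ = p ^ finrank (ZMod p) D - 1 := by
  rw [Nat.card_units, Module.natCard_eq_pow_finrank (K := ZMod p), Nat.card_zmod]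

lemma exists_natCard_units_eq_prod_of_isReduced (p : ℕ) [Fact p.Prime] (A : Type*) [CommRing A]
    [Algebra (ZMod p) A] [Finite A] [IsReduced A] :
    ∃ (t : ℕ) (n : Fin t → ℕ), (∀ i, 0 < n i) ∧ Nat.card Aˣ = ∏ i, (p ^ n i - 1) := by
  have : Fintype (MaximalSpectrum A) := Fintype.ofFinite _
  let e := (Fintype.equivFin (MaximalSpectrum A)).symm
  refine ⟨_, fun i => finrank (ZMod p) (A ⧸ (e i).asIdeal), fun i => Module.finrank_pos, ?_⟩
  rw [Nat.card_congr (Units.mapEquiv (IsArtinianRing.equivPi A).toMulEquiv).toEquiv,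
    Nat.card_congr MulEquiv.piUnits.toEquiv, Nat.card_pi, ← e.prod_comp]
  refine Finset.prod_congr rfl fun i _ => ?_
  have := (e i).isMaximal
  let := Ideal.Quotient.field (e i).asIdeal
  have : Finite (A ⧸ (e i).asIdeal) := Finite.of_surjective _ Ideal.Quotient.mk_surjective
  exact natCard_units_eq_pow_finrank_sub_one p (A ⧸ (e i).asIdeal)

theorem exists_natCard_units_eq_prod_of_odd (R : Type*) [CommRing R] (h : Odd (Nat.card Rˣ)) :
    ∃ (t : ℕ) (n : Fin t → ℕ), (∀ i, 0 < n i) ∧ Nat.card Rˣ = ∏ i, (2 ^ n i - 1) := by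
  rcases subsingleton_or_nontrivial R with hR | hR
  · exact ⟨0, Fin.elim0, Fin.rec0, by simp⟩
  have := charP_two_of_odd_natCard_units R h
  have : Fact (Nat.Prime 2) := ⟨Nat.prime_two⟩
  have : IsReduced R := isReduced_of_coprime_natCard_units R 2 (Nat.coprime_two_right.mpr h)
  let := ZMod.algebra R 2
  have : Finite Rˣ := Nat.finite_of_card_ne_zero h.pos.ne'
  have : Finite (IsUnit.submonoid R) :=
    (Set.finite_range (Units.val : Rˣ → R)).subset fun x hx => ⟨hx.unit, rfl⟩
  let A := Algebra.adjoin (ZMod 2) (IsUnit.submonoid R : Set R)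
  have : Finite A := Algebra.finite_adjoin_submonoid _
  have : IsReduced A := isReduced_of_injective A.val Subtype.val_injective
  rw [← SubmonoidClass.natCard_units_eq_of_forall_units_mem A
    fun u => Algebra.subset_adjoin u.isUnit]
  exact exists_natCard_units_eq_prod_of_isReduced 2 A

/-- A cardinal `λ` is the cardinality of the group of units of some commutative
ring if and only if `λ` is an odd number of the form `∏ i, (2 ^ nᵢ - 1)` for
positive integers `n₁, …, n_t`, or an even (positive) number, or an infinite
cardinal. -/
theorem card_units_iff
    (lam : Cardinal.{u}) :
    (∃ (R : Type u) (_ : CommRing R), Cardinal.mk Rˣ = lam) ↔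
      ((∃ k : ℕ, lam = k ∧ Odd k ∧
          ∃ (t : ℕ) (n : Fin t → ℕ), (∀ i, 0 < n i) ∧ k = ∏ i, (2 ^ n i - 1)) ∨
        (∃ k : ℕ, lam = k ∧ 0 < k ∧ Even k) ∨
        Cardinal.aleph0 ≤ lam) := by
  constructor
  · rintro ⟨R, _, rfl⟩
    rcases finite_or_infinite Rˣ with hfin | hinf
    · rw [← Nat.cast_card]
      rcases Nat.even_or_odd (Nat.card Rˣ) with heven | hodd
      · exact Or.inr (Or.inl ⟨_, rfl, Nat.card_pos, heven⟩)
      · exact Or.inl ⟨_, rfl, hodd, exists_natCard_units_eq_prod_of_odd R hodd⟩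
    · exact Or.inr (Or.inr (Cardinal.infinite_iff.mp hinf))
  · rintro (⟨k, rfl, hodd, t, n, hn, rfl⟩ | ⟨k, rfl, hpos, m, rfl⟩ | hinf)
    · have : Fact (Nat.Prime 2) := ⟨Nat.prime_two⟩
      exact exists_commRing_mk_units_eq_of_natCard_units hodd.pos.ne'
        (natCard_units_pi_galoisField 2 n fun i => (hn i).ne')
    · have : NeZero m := ⟨by omega⟩
      obtain ⟨R, _, hR⟩ := exists_commRing_natCard_units_eq_two_mul m
      exact exists_commRing_mk_units_eq_of_natCard_units hpos.ne' (two_mul m ▸ hR)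
    · have : Infinite lam.out := Cardinal.infinite_iff.mpr (by rwa [Cardinal.mk_out])
      obtain ⟨_⟩ := Infinite.nonempty_field (α := lam.out)
      exact ⟨lam.out, inferInstance, by rw [mk_units_eq_mk_of_infinite, Cardinal.mk_out]⟩
end
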